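/- Let E_X > 0 and let p_l = 1/(1 + e^{2^l/E_X}) for l ∈ ℤ. Then for all integers L₁, L₂ with -L₁ ≤ L₂, the finite sum satisfies Σ_{l = -L₁}^{L₂} 2^l · p_l < E_X. (Hence the choice p_l = 1/(1+e^{2^l/E_X}) satisfies the input mean constraint Σ_{l=-L₁}^{L₂} 2^l p_l ≤ E_X required by the expansion coding scheme.) -/

import Mathlib

/-!
With `g t = t / (exp (t / E_X) - 1)`, the identity `e^{2x} - 1 = (e^x - 1)(e^x + 1)` gives
`2^l p_l = g (2^l) - g (2^(l+1))`, so the sum telescopes to `g (2^(-L₁)) - g (2^(L₂+1))`.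
Since `g > 0` and `g t < E_X` (from `x < e^x - 1` for `x > 0`), the sum is below `E_X`.
-/

open Real Finset

theorem Int.sum_Icc_sub_add_one {M : Type*} [AddCommGroup M] (f : ℤ → M) {a b : ℤ} (h : a ≤ b) :
    ∑ l ∈ Icc a b, (f l - f (l + 1)) = f a - f (b + 1) := by
  induction b, h using Int.leInduction with
  | base => simp
  | succ n hn ih =>
    rw [← insert_Icc_right_eq_Icc_add_one (by omega), sum_insert (by simp), ih]
    abel

noncomputable def meanTail (E t : ℝ) : ℝ := t / (exp (t / E) - 1)

section meanTail

variable {E t : ℝ}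

theorem meanTail_sub_meanTail_two_mul (hE : E ≠ 0) (ht : t ≠ 0) :
    meanTail E t - meanTail E (2 * t) = t * (1 / (1 + exp (t / E))) := by
  have hexp : exp (t / E) - 1 ≠ 0 :=
    sub_ne_zero.2 fun h1 => div_ne_zero ht hE (exp_eq_one_iff _ |>.1 h1)
  have hexp_two : exp (2 * t / E) = exp (t / E) ^ 2 := by
    rw [← exp_nat_mul]; ring_nf
  have hsq : exp (t / E) ^ 2 - 1 = (exp (t / E) - 1) * (1 + exp (t / E)) := by ring
  rw [meanTail, meanTail, hexp_two, hsq]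
  field_simp
  ring

theorem meanTail_pos (hE : 0 < E) (ht : 0 < t) : 0 < meanTail E t :=
  div_pos ht (sub_pos.2 (one_lt_exp_iff.2 (div_pos ht hE)))

theorem meanTail_lt (hE : 0 < E) (ht : 0 < t) : meanTail E t < E := by
  have hx : t / E < exp (t / E) - 1 := by linarith [add_one_lt_exp (div_pos ht hE).ne']
  rw [meanTail, div_lt_iff₀ ((div_pos ht hE).trans hx)]
  rwa [div_lt_iff₀ hE, mul_comm] at hx

end meanTail

theorem expansion_input_mean_constraint (EX : ℝ) (hEX : 0 < EX) (L1 L2 : ℤ) (h : -L1 ≤ L2) :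
    ∑ l ∈ Finset.Icc (-L1) L2, (2 : ℝ) ^ l * (1 / (1 + Real.exp (2 ^ l / EX))) < EX := by
  have hterm (l : ℤ) : (2 : ℝ) ^ l * (1 / (1 + exp (2 ^ l / EX))) =
      meanTail EX (2 ^ l) - meanTail EX (2 ^ (l + 1)) := by
    rw [zpow_add_one₀ two_ne_zero, mul_comm _ (2 : ℝ),
      meanTail_sub_meanTail_two_mul hEX.ne' (zpow_ne_zero l two_ne_zero)]
  simp_rw [hterm]
  rw [Int.sum_Icc_sub_add_one (fun l => meanTail EX (2 ^ l)) h]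
  linarith [meanTail_lt hEX (zpow_pos two_pos (-L1)), meanTail_pos hEX (zpow_pos two_pos (L2 + 1))]
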